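/- Let s ∈ ℝ and let w : ℤⁿ × Gr(d,n) → (0,∞) be a weight such that Σ_{A ∈ Ω_k} w(k,A)² ≤ C_w² for every k ∈ ℤⁿ and such that W_k := Σ_{A ∈ Ω_k} w(k,A)² ≥ c_w² for every k ∈ ℤⁿ, for some constants C_w, c_w > 0. Then for every f ∈ L²(𝕋ⁿ) one has the stability estimate Σ_{k ∈ ℤⁿ} ⟨k⟩^{2s} |f̂(k)|² ≤ c_w^{−2} Σ_{A ∈ Gr(d,n)} Σ_{k ∈ ℤⁿ} ⟨k⟩^{2s} w(k,A)² |\widehat{R_{d,A} f}(k)|², i.e. ‖f‖_{H^s(𝕋ⁿ)} ≤ (1/c_w) ‖R_d f‖_{L_s^{2,2}(X_{d,n};w)} (both sides possibly infinite). -/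

import Mathlib

noncomputable section
open MeasureTheory Real
open scoped ENNReal NNReal

instance : Fact ((0:ℝ) < 1) := ⟨one_pos⟩

/-- The flat torus `𝕋ⁿ = ℝⁿ/ℤⁿ`, with the probability Haar (Lebesgue) measure. -/
abbrev Torus (n : ℕ) := Fin n → AddCircle (1:ℝ)

/-- The quotient map `π : ℝⁿ → 𝕋ⁿ`. -/
def tmap {n : ℕ} (x : Fin n → ℝ) : Torus n := fun i => (x i : AddCircle (1:ℝ))

/-- The character `x ↦ e^{2πi k·x}` on the torus. -/
def char {n : ℕ} (k : Fin n → ℤ) (x : Torus n) : ℂ := ∏ i, fourier (k i) (x i)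

/-- The Fourier coefficient `f̂(k) = ∫ f(x) e^{−2πi k·x} dx`. -/
def fCoeff {n : ℕ} (f : Torus n → ℂ) (k : Fin n → ℤ) : ℂ := ∫ x, char (-k) x * f x

/-- The `d`-plane Radon transform on `𝕋ⁿ` associated to integer vectors `v₁, …, v_d`:
`R f(x) = ∫_{[0,1]^d} f(x + t₁v₁ + ⋯ + t_d v_d) dt`. -/
def radon {n d : ℕ} (v : Fin d → Fin n → ℤ) (f : Torus n → ℂ) (x : Torus n) : ℂ :=
  ∫ t in Set.Icc (0 : Fin d → ℝ) 1, f (x + tmap fun i => ∑ j, t j * (v j i : ℝ))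

/-- The Grassmannian `Gr(d,n)`: `d`-dimensional `ℚ`-linear subspaces of `ℚⁿ`. -/
def Gr (d n : ℕ) : Type := {A : Submodule ℚ (Fin n → ℚ) // Module.finrank ℚ A = d}

/-- `A ∈ Ω_k` iff `k ⊥ A`, i.e. `k·q = 0` for all `q ∈ A`. -/
def perp {n : ℕ} (d : ℕ) (k : Fin n → ℤ) : Set (Gr d n) :=
  {A | ∀ q ∈ A.1, ∑ i, (k i : ℚ) * q i = 0}

/-- `V` is a basis of integer vectors for `A ∈ Gr(d,n)`. -/
def IsIntBasis {n d : ℕ} (A : Gr d n) (V : Fin d → Fin n → ℤ) : Prop :=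
  LinearIndependent ℚ (fun j => fun i => (V j i : ℚ)) ∧
    Submodule.span ℚ (Set.range (fun j => fun i => (V j i : ℚ))) = A.1

/-- `W_k = Σ_{A ∈ Ω_k} w(k,A)²`. -/
def Wk {n : ℕ} (d : ℕ) (w : (Fin n → ℤ) → Gr d n → ℝ) (k : Fin n → ℤ) : ℝ :=
  (∑' A : perp d k, ENNReal.ofReal (w k A.1 ^ 2)).toReal

/-- `⟨k⟩² = 1 + |k|²` for `k ∈ ℤⁿ`. -/
def nrmSqN {n : ℕ} (k : Fin n → ℤ) : ℝ := 1 + ∑ i, (k i : ℝ)^2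

/-!
If `k ⊥ A`, then every translate of `f` along `A` has the same `k`-th Fourier coefficient as `f`,
so by Fubini `\widehat{R_A f}(k) = f̂(k)` for all `A ∈ Ω_k`. Keeping only the pairs `(A, k)` with
`A ∈ Ω_k` on the right-hand side therefore leaves `Σ_k ⟨k⟩^{2s} W_k |f̂(k)|²`, which is at least
`c_w² Σ_k ⟨k⟩^{2s} |f̂(k)|²`.
-/

section Characters

variable {n : ℕ}

lemma continuous_char (k : Fin n → ℤ) : Continuous (char k) :=
  continuous_finsetProd _ fun i _ => (fourier (k i)).continuous.comp (continuous_apply i)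

lemma norm_char (k : Fin n → ℤ) (x : Torus n) : ‖char k x‖ = 1 := by
  simp [char, norm_prod, Circle.norm_coe]

lemma char_add (k : Fin n → ℤ) (x y : Torus n) : char k (x + y) = char k x * char k y := by
  simp only [char, Pi.add_apply, ← Finset.prod_mul_distrib, fourier_apply, smul_add,
    AddCircle.toCircle_add, Circle.coe_mul]

lemma char_tmap_eq_one {k : Fin n → ℤ} {r : Fin n → ℝ} (h : ∑ i, (k i : ℝ) * r i = 0) :
    char k (tmap r) = 1 := by
  simp only [char, tmap, fourier_coe_apply, ← Complex.exp_sum]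
  rw [← Complex.exp_zero]
  congr 1
  have := congrArg (fun x : ℝ => 2 * π * Complex.I * (x : ℂ)) h
  simp only [Complex.ofReal_sum, Complex.ofReal_mul, Finset.mul_sum] at this
  simpa [mul_assoc] using this

end Characters

section Translation

variable {n : ℕ} {f : Torus n → ℂ}

lemma fCoeff_comp_add_right {k : Fin n → ℤ} {y : Torus n} (hy : char (-k) y = 1) :
    fCoeff (fun x => f (x + y)) k = fCoeff f k := by
  calc fCoeff (fun x => f (x + y)) k = ∫ x, char (-k) (x + y) * f (x + y) := by
        simp only [fCoeff, char_add, hy, mul_one]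
    _ = fCoeff f k := integral_add_right_eq_self (fun x => char (-k) x * f x) y

lemma map_add_prod_eq_smul {α : Type*} [MeasurableSpace α] (ν : Measure α) [IsFiniteMeasure ν]
    {γ : α → Torus n} (hγ : Measurable γ) :
    (ν.prod volume).map (fun p : α × Torus n => p.2 + γ p.1) = ν Set.univ • volume := by
  have shear : MeasurePreserving (fun p : α × Torus n => (p.1, p.2 + γ p.1))
      (ν.prod volume) (ν.prod volume) :=
    (MeasurePreserving.id ν).skew_product (measurable_snd.add (hγ.comp measurable_fst))
      (Filter.Eventually.of_forall fun t => map_add_right_eq_self volume (γ t))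
  have h := Measure.map_map (μ := ν.prod volume) measurable_snd shear.measurable
  rw [shear.map_eq, Measure.map_snd_prod] at h
  exact h.symm

lemma integrable_comp_add_prod {α : Type*} [MeasurableSpace α] (ν : Measure α)
    [IsFiniteMeasure ν] {γ : α → Torus n} (hγ : Measurable γ) (hf : Integrable f) :
    Integrable (fun p : α × Torus n => f (p.2 + γ p.1)) (ν.prod volume) := by
  have hmeas : Measurable fun p : α × Torus n => p.2 + γ p.1 :=
    measurable_snd.add (hγ.comp measurable_fst)
  have hf' : Integrable f ((ν.prod volume).map fun p : α × Torus n => p.2 + γ p.1) := by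
    rw [map_add_prod_eq_smul ν hγ]
    exact hf.smul_measure (measure_ne_top ν Set.univ)
  exact (integrable_map_measure hf'.aestronglyMeasurable hmeas.aemeasurable).mp hf'

lemma fCoeff_integral_comp_add {α : Type*} [MeasurableSpace α] (ν : Measure α)
    [IsFiniteMeasure ν] {γ : α → Torus n} (hγ : Measurable γ) (hf : Integrable f)
    (k : Fin n → ℤ) :
    fCoeff (fun x => ∫ t, f (x + γ t) ∂ν) k = ∫ t, fCoeff (fun x => f (x + γ t)) k ∂ν := by
  have hint : Integrable (fun p : α × Torus n => char (-k) p.2 * f (p.2 + γ p.1))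
      (ν.prod volume) :=
    (integrable_comp_add_prod ν hγ hf).bdd_mul
      ((continuous_char (-k)).measurable.comp measurable_snd).aestronglyMeasurable
      (Filter.Eventually.of_forall fun p => (norm_char (-k) p.2).le)
  simp only [fCoeff, ← integral_const_mul]
  exact (integral_integral_swap hint).symm

end Translation

lemma IsIntBasis.sum_mul_eq_zero_of_mem_perp {n d : ℕ} {A : Gr d n} {V : Fin d → Fin n → ℤ}
    (hV : IsIntBasis A V) {k : Fin n → ℤ} (hA : A ∈ perp d k) (j : Fin d) :
    ∑ i, (k i : ℝ) * V j i = 0 := by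
  have hmem : (fun i => (V j i : ℚ)) ∈ A.1 := hV.2 ▸ Submodule.subset_span ⟨j, rfl⟩
  have h := congrArg (Rat.cast : ℚ → ℝ) (hA _ hmem)
  push_cast at h
  exact h

lemma fCoeff_radon_of_sum_mul_eq_zero {n d : ℕ} {v : Fin d → Fin n → ℤ} {k : Fin n → ℤ}
    (hk : ∀ j, ∑ i, (k i : ℝ) * v j i = 0) {f : Torus n → ℂ} (hf : Integrable f) :
    fCoeff (radon v f) k = fCoeff f k := by
  set γ : (Fin d → ℝ) → Torus n := fun t => tmap fun i => ∑ j, t j * (v j i : ℝ)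
  have hγ : Continuous γ :=
    continuous_pi fun i => (AddCircle.continuous_mk' 1).comp (by fun_prop)
  have hγk : ∀ t, char (-k) (γ t) = 1 := fun t => by
    refine char_tmap_eq_one ?_
    calc ∑ i, ((-k) i : ℝ) * ∑ j, t j * (v j i : ℝ)
        = -∑ j, t j * ∑ i, (k i : ℝ) * v j i := by
          simp only [Pi.neg_apply, Int.cast_neg, Finset.mul_sum, ← Finset.sum_neg_distrib]
          rw [Finset.sum_comm]
          exact Finset.sum_congr rfl fun j _ => Finset.sum_congr rfl fun i _ => by ring
      _ = 0 := by simp [hk]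
  have : IsProbabilityMeasure (volume.restrict (Set.Icc (0 : Fin d → ℝ) 1)) :=
    ⟨by simp [Real.volume_Icc_pi]⟩
  calc fCoeff (radon v f) k
      = ∫ t in Set.Icc (0 : Fin d → ℝ) 1, fCoeff (fun x => f (x + γ t)) k :=
        fCoeff_integral_comp_add _ hγ.measurable hf k
    _ = ∫ t in Set.Icc (0 : Fin d → ℝ) 1, fCoeff f k := by
        simp only [fCoeff_comp_add_right (hγk _)]
    _ = fCoeff f k := by simp

lemma ENNReal.tsum_le_inv_mul_tsum_tsum {ι κ : Type*} {F : ι → ℝ≥0∞} {G : κ → ι → ℝ≥0∞}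
    {c : ℝ≥0∞} (hc₀ : c ≠ 0) (hc : c ≠ ∞) (h : ∀ i, c * F i ≤ ∑' j, G j i) :
    ∑' i, F i ≤ c⁻¹ * ∑' (j) (i), G j i := by
  rw [← ENNReal.div_eq_inv_mul, ENNReal.le_div_iff_mul_le (.inl hc₀) (.inl hc), mul_comm,
    ← ENNReal.tsum_mul_left, ENNReal.tsum_comm]
  exact ENNReal.tsum_le_tsum h

theorem radon_stability_estimate_general
    (n d : ℕ) (s : ℝ)
    (V : (A : Gr d n) → Fin d → Fin n → ℤ) (hV : ∀ A : Gr d n, IsIntBasis A (V A))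
    (w : (Fin n → ℤ) → Gr d n → ℝ)
    (cw : ℝ) (hcw : 0 < cw)
    (hlow : ∀ k : Fin n → ℤ,
      ENNReal.ofReal (cw ^ 2) ≤ ∑' A : perp d k, ENNReal.ofReal (w k A.1 ^ 2))
    (f : Torus n → ℂ) (hf : MemLp f 2 (volume : Measure (Torus n))) :
    ∑' k : Fin n → ℤ, ENNReal.ofReal (nrmSqN k ^ s) * (‖fCoeff f k‖₊ : ℝ≥0∞) ^ 2
      ≤ (ENNReal.ofReal (cw ^ 2))⁻¹ *
          ∑' (A : Gr d n) (k : Fin n → ℤ),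
            ENNReal.ofReal (nrmSqN k ^ s * w k A ^ 2) *
              (‖fCoeff (radon (V A) f) k‖₊ : ℝ≥0∞) ^ 2 := by
  have hfInt : Integrable f := hf.integrable one_le_two
  refine ENNReal.tsum_le_inv_mul_tsum_tsum (ENNReal.ofReal_pos.2 (pow_pos hcw 2)).ne'
    ENNReal.ofReal_ne_top fun k => ?_
  have hs : 0 ≤ nrmSqN k ^ s := Real.rpow_nonneg (by unfold nrmSqN; positivity) s
  calc ENNReal.ofReal (cw ^ 2) * (ENNReal.ofReal (nrmSqN k ^ s) * (‖fCoeff f k‖₊ : ℝ≥0∞) ^ 2)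
      ≤ (∑' A : perp d k, ENNReal.ofReal (w k A.1 ^ 2)) *
          (ENNReal.ofReal (nrmSqN k ^ s) * (‖fCoeff f k‖₊ : ℝ≥0∞) ^ 2) := by
        gcongr
        exact hlow k
    _ = ∑' A : perp d k, ENNReal.ofReal (nrmSqN k ^ s * w k A.1 ^ 2) *
          (‖fCoeff (radon (V A.1) f) k‖₊ : ℝ≥0∞) ^ 2 := by
        rw [← ENNReal.tsum_mul_right]
        refine tsum_congr fun A => ?_
        rw [fCoeff_radon_of_sum_mul_eq_zero ((hV A.1).sum_mul_eq_zero_of_mem_perp A.2) hfInt,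
          ENNReal.ofReal_mul hs]
        ring
    _ ≤ ∑' A : Gr d n, ENNReal.ofReal (nrmSqN k ^ s * w k A ^ 2) *
          (‖fCoeff (radon (V A) f) k‖₊ : ℝ≥0∞) ^ 2 :=
        ENNReal.tsum_comp_le_tsum_of_injective Subtype.val_injective _

theorem radon_stability_estimate
    (n d : ℕ) (hn : 2 ≤ n) (hd1 : 1 ≤ d) (hd2 : d ≤ n - 1) (s : ℝ)
    (V : (A : Gr d n) → Fin d → Fin n → ℤ) (hV : ∀ A : Gr d n, IsIntBasis A (V A))
    (w : (Fin n → ℤ) → Gr d n → ℝ) (hw : ∀ k A, 0 < w k A)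
    (Cw cw : ℝ) (hCw : 0 < Cw) (hcw : 0 < cw)
    (hsum : ∀ k : Fin n → ℤ,
      ∑' A : perp d k, ENNReal.ofReal (w k A.1 ^ 2) ≤ ENNReal.ofReal (Cw ^ 2))
    (hlow : ∀ k : Fin n → ℤ,
      ENNReal.ofReal (cw ^ 2) ≤ ∑' A : perp d k, ENNReal.ofReal (w k A.1 ^ 2))
    (f : Torus n → ℂ) (hf : MemLp f 2 (volume : Measure (Torus n))) :
    ∑' k : Fin n → ℤ, ENNReal.ofReal (nrmSqN k ^ s) * (‖fCoeff f k‖₊ : ℝ≥0∞) ^ 2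
      ≤ (ENNReal.ofReal (cw ^ 2))⁻¹ *
          ∑' (A : Gr d n) (k : Fin n → ℤ),
            ENNReal.ofReal (nrmSqN k ^ s * w k A ^ 2) *
              (‖fCoeff (radon (V A) f) k‖₊ : ℝ≥0∞) ^ 2 :=
  radon_stability_estimate_general n d s V hV w cw hcw hlow f hf
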